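/- Let m, n be positive integers and let φ : M_{mn}(ℂ) → M_{mn}(ℂ) be a linear RT-symmetric map, i.e. tr(φ(A)·B) = tr(φ(B)·A) for all A, B ∈ M_{mn}(ℂ). Then det(exp(φ(A ⊕ B))) = det(exp(A ⊕ B)) for all A ∈ M_m(ℂ) and B ∈ M_n(ℂ) if and only if tr₁(φ(I_{mn})) = m·I_n and tr₂(φ(I_{mn})) = n·I_m. -/

import Mathlib

open Matrix Kronecker BigOperators

/-- The Kronecker sum `A ⊕ B = A ⊗ Iₙ + Iₘ ⊗ B`. -/
def kronSum {F : Type*} [CommRing F] {m n : ℕ}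
    (A : Matrix (Fin m) (Fin m) F) (B : Matrix (Fin n) (Fin n) F) :
    Matrix (Fin m × Fin n) (Fin m × Fin n) F :=
  A ⊗ₖ (1 : Matrix (Fin n) (Fin n) F) + (1 : Matrix (Fin m) (Fin m) F) ⊗ₖ B

/-- The first partial trace `tr₁(P) = Σⱼ Pⱼⱼ` (sum of the diagonal blocks). -/
def ptrace1 {F : Type*} [AddCommMonoid F] {m n : ℕ}
    (P : Matrix (Fin m × Fin n) (Fin m × Fin n) F) :
    Matrix (Fin n) (Fin n) F :=
  Matrix.of fun a b => ∑ k : Fin m, P (k, a) (k, b)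

/-- The second partial trace `tr₂(P) = Σ_{k,l} tr(P_{kl}) E_{kl}` (blockwise trace). -/
def ptrace2 {F : Type*} [AddCommMonoid F] {m n : ℕ}
    (P : Matrix (Fin m × Fin n) (Fin m × Fin n) F) :
    Matrix (Fin m) (Fin m) F :=
  Matrix.of fun k l => ∑ a : Fin n, P (k, a) (l, a)

/-!
Since `det (exp X) = exp (tr X)` (Jacobi's formula) and `A ⊕ B` may be rescaled to
`t • (A ⊕ B)`, the determinant condition says exactly that `φ` preserves the trace of every
Kronecker sum. RT-symmetry gives `tr (φ X) = tr (φ I * X)`, and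
`tr (P * (A ⊕ B)) = tr (tr₂ P * A) + tr (tr₁ P * B)`; so the condition holds iff
`tr₁ (φ I) = tr₁ I = m • I` and `tr₂ (φ I) = tr₂ I = n • I`.
-/

open NormedSpace

theorem Equiv.Perm.exists_ne_apply_ne_of_ne_one {α : Type*} [Fintype α] [DecidableEq α]
    {σ : Equiv.Perm α} (hσ : σ ≠ 1) (a : α) : ∃ b, b ≠ a ∧ σ b ≠ b := by
  obtain ⟨b, hb, hba⟩ := Finset.exists_mem_ne (Equiv.Perm.two_le_card_support_of_ne_one hσ) a
  exact ⟨b, hba, Equiv.Perm.mem_support.1 hb⟩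

namespace Matrix

variable {𝕜 ι : Type*} [Fintype ι] [DecidableEq ι]

theorem hasDerivAt_det_of_eq_one [NontriviallyNormedField 𝕜] {M : 𝕜 → Matrix ι ι 𝕜}
    {M' : Matrix ι ι 𝕜} {t : 𝕜} (hMt : M t = 1)
    (hM : ∀ i j, HasDerivAt (fun s => M s i j) (M' i j) t) :
    HasDerivAt (fun s => (M s).det) M'.trace t := by
  have hdet := HasDerivAt.fun_sum (u := Finset.univ) fun σ _ =>
    (HasDerivAt.fun_finsetProd (u := Finset.univ) fun i _ => hM (σ i) i).const_mul
      ((Equiv.Perm.sign σ : ℤ) : 𝕜)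
  simp only [← det_apply'] at hdet
  refine hdet.congr_deriv ?_
  -- at `M t = 1`, every non-identity permutation has a vanishing first-order term
  rw [Finset.sum_eq_single 1 (fun σ _ hσ => ?_) (by simp)]
  · simp [hMt, trace, Finset.prod_eq_one]
  · refine mul_eq_zero_of_right _ (Finset.sum_eq_zero fun i _ => ?_)
    obtain ⟨b, hbi, hσb⟩ := Equiv.Perm.exists_ne_apply_ne_of_ne_one hσ i
    rw [Finset.prod_eq_zero (Finset.mem_erase.2 ⟨hbi, Finset.mem_univ b⟩)
      (by rw [hMt, one_apply_ne hσb]), zero_smul]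

open scoped Matrix.Norms.Operator in
theorem hasDerivAt_det_exp_smul [RCLike 𝕜] (A : Matrix ι ι 𝕜) (t : 𝕜) :
    HasDerivAt (fun s : 𝕜 => (exp (s • A)).det) ((exp (t • A)).det * A.trace) t := by
  have hentry : ∀ i j, HasDerivAt (fun s : 𝕜 => exp (s • A) i j) (A i j) 0 := fun i j => by
    let entry : Matrix ι ι 𝕜 →L[𝕜] 𝕜 := LinearMap.toContinuousLinearMap
      (entryLinearMap 𝕜 𝕜 i j)
    have := entry.hasFDerivAt.comp_hasDerivAt (0 : 𝕜) (hasDerivAt_exp_smul_const A (0 : 𝕜))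
    simp only [zero_smul, exp_zero, one_mul] at this
    exact this
  have h0 : HasDerivAt (fun s : 𝕜 => (exp (s • A)).det) A.trace (t - t) := by
    rw [sub_self]; exact hasDerivAt_det_of_eq_one (by simp) hentry
  have h1 := h0.comp (h := fun s : 𝕜 => s - t) t ((hasDerivAt_id' t).sub_const t)
  have hmul : ∀ s : 𝕜,
      (exp (s • A)).det = (exp (t • A)).det * (exp ((s - t) • A)).det := fun s => by
    rw [← det_mul, ← exp_add_of_commute _ _ ((Commute.refl A).smul_left _ |>.smul_right _),
      ← add_smul, add_sub_cancel]
  simpa [Function.comp_def, ← hmul] using h1.const_mul (exp (t • A)).det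


theorem det_exp [RCLike 𝕜] (A : Matrix ι ι 𝕜) : (exp A).det = exp A.trace := by
  set F : 𝕜 → 𝕜 := fun s => (exp (s • A)).det * exp (s • -A.trace) with hF
  have hF' : ∀ s, HasDerivAt F 0 s := fun s => by
    refine ((hasDerivAt_det_exp_smul A s).mul
      (hasDerivAt_exp_smul_const (-A.trace) s)).congr_deriv ?_
    ring
  have hF10 : F 1 = F 0 :=
    is_const_of_deriv_eq_zero (fun s => (hF' s).differentiableAt) (fun s => (hF' s).deriv) 1 0
  simp only [hF, one_smul, zero_smul, exp_zero, det_one, mul_one] at hF10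
  rwa [NormedSpace.exp_neg, mul_inv_eq_one₀ (NormedSpace.isUnit_exp _).ne_zero] at hF10

end Matrix

theorem eq_of_forall_exp_smul_eq {𝕂 𝔸 : Type*} [RCLike 𝕂] [NormedRing 𝔸]
    [NormedAlgebra 𝕂 𝔸] [CompleteSpace 𝔸] {x y : 𝔸}
    (h : ∀ t : 𝕂, exp (t • x) = exp (t • y)) : x = y := by
  have hy := hasDerivAt_exp_smul_const (𝕂 := 𝕂) y 0
  rw [← funext h] at hy
  simpa using (hasDerivAt_exp_smul_const (𝕂 := 𝕂) x 0).unique hy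

section Algebraic

variable {R : Type*} {m n : ℕ}

theorem trace_mul_kronecker_one [Semiring R] (P : Matrix (Fin m × Fin n) (Fin m × Fin n) R)
    (A : Matrix (Fin m) (Fin m) R) :
    (P * (A ⊗ₖ (1 : Matrix (Fin n) (Fin n) R))).trace = (ptrace2 P * A).trace := by
  simp only [trace, diag, mul_apply, ptrace2, of_apply, kroneckerMap_apply, one_apply,
    Fintype.sum_prod_type, mul_ite, mul_one, mul_zero, Finset.sum_ite_eq', Finset.mem_univ,
    if_true, Finset.sum_mul]
  exact Finset.sum_congr rfl fun k _ => Finset.sum_comm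

theorem trace_mul_one_kronecker [Semiring R] (P : Matrix (Fin m × Fin n) (Fin m × Fin n) R)
    (B : Matrix (Fin n) (Fin n) R) :
    (P * ((1 : Matrix (Fin m) (Fin m) R) ⊗ₖ B)).trace = (ptrace1 P * B).trace := by
  simp only [trace, diag, mul_apply, ptrace1, of_apply, kroneckerMap_apply, one_apply,
    Fintype.sum_prod_type, ite_mul, one_mul, zero_mul, Finset.sum_mul]
  rw [Finset.sum_comm]
  refine Finset.sum_congr rfl fun b _ => ?_
  simp only [mul_ite, mul_zero, Finset.sum_ite_irrel, Finset.sum_const_zero, Finset.sum_ite_eq',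
    Finset.mem_univ, if_true]
  exact Finset.sum_comm

theorem trace_mul_kronSum [CommRing R] (P : Matrix (Fin m × Fin n) (Fin m × Fin n) R)
    (A : Matrix (Fin m) (Fin m) R) (B : Matrix (Fin n) (Fin n) R) :
    (P * kronSum A B).trace = (ptrace2 P * A).trace + (ptrace1 P * B).trace := by
  rw [kronSum, mul_add, trace_add, trace_mul_kronecker_one, trace_mul_one_kronecker]

theorem ptrace1_one [Semiring R] :
    ptrace1 (1 : Matrix (Fin m × Fin n) (Fin m × Fin n) R) = (m : R) • 1 := by
  ext a b
  by_cases h : a = b <;> simp [ptrace1, one_apply, h]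

theorem ptrace2_one [Semiring R] :
    ptrace2 (1 : Matrix (Fin m × Fin n) (Fin m × Fin n) R) = (n : R) • 1 := by
  ext k l
  by_cases h : k = l <;> simp [ptrace2, one_apply, h]

theorem kronSum_smul [CommRing R] (t : R) (A : Matrix (Fin m) (Fin m) R)
    (B : Matrix (Fin n) (Fin n) R) : kronSum (t • A) (t • B) = t • kronSum A B := by
  rw [kronSum, kronSum, smul_kronecker, kronecker_smul, smul_add]

theorem forall_trace_mul_kronSum_eq_iff [CommRing R]
    (P Q : Matrix (Fin m × Fin n) (Fin m × Fin n) R) :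
    (∀ A B, (P * kronSum A B).trace = (Q * kronSum A B).trace) ↔
      ptrace1 P = ptrace1 Q ∧ ptrace2 P = ptrace2 Q := by
  simp only [trace_mul_kronSum]
  refine ⟨fun h => ⟨?_, ?_⟩, fun ⟨h₁, h₂⟩ A B => by rw [h₁, h₂]⟩
  · exact ext_iff_trace_mul_right.2 fun B => by simpa using h 0 B
  · exact ext_iff_trace_mul_right.2 fun A => by simpa using h A 0

end Algebraic

theorem det_exp_kronSum_preserved_iff_of_rt_symmetric_general
    {m n : ℕ}
    (φ : Matrix (Fin m × Fin n) (Fin m × Fin n) ℂ →ₗ[ℂ]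
         Matrix (Fin m × Fin n) (Fin m × Fin n) ℂ)
    (hsym : ∀ A B : Matrix (Fin m × Fin n) (Fin m × Fin n) ℂ,
        (φ A * B).trace = (φ B * A).trace) :
    (∀ (A : Matrix (Fin m) (Fin m) ℂ) (B : Matrix (Fin n) (Fin n) ℂ),
        (NormedSpace.exp (φ (kronSum A B))).det = (NormedSpace.exp (kronSum A B)).det) ↔
      (ptrace1 (φ 1) = (m : ℂ) • (1 : Matrix (Fin n) (Fin n) ℂ) ∧
       ptrace2 (φ 1) = (n : ℂ) • (1 : Matrix (Fin m) (Fin m) ℂ)) := by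
  have hφ : ∀ X, (φ X).trace = (φ 1 * X).trace := fun X => by simpa using hsym X 1
  have htrace : (∀ A B, (exp (φ (kronSum A B))).det = (exp (kronSum A B)).det) ↔
      ∀ A B, (φ 1 * kronSum A B).trace = (1 * kronSum A B).trace := by
    simp only [det_exp, ← hφ, one_mul]
    refine ⟨fun h A B => eq_of_forall_exp_smul_eq (𝕂 := ℂ) fun t => ?_,
      fun h A B => by rw [h]⟩
    simpa [kronSum_smul, trace_smul] using h (t • A) (t • B)
  rw [htrace, forall_trace_mul_kronSum_eq_iff, ptrace1_one, ptrace2_one]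

/-- Theorem 4.2: an RT-symmetric linear map `φ` on `M_{mn}(ℂ)` (i.e.
`tr(φ(A)B) = tr(φ(B)A)` for all `A, B`) preserves the determinant of `exp` of all
Kronecker sums iff `tr₁(φ(I)) = m·Iₙ` and `tr₂(φ(I)) = n·Iₘ`. -/
theorem det_exp_kronSum_preserved_iff_of_rt_symmetric
    {m n : ℕ} (hm : 0 < m) (hn : 0 < n)
    (φ : Matrix (Fin m × Fin n) (Fin m × Fin n) ℂ →ₗ[ℂ]
         Matrix (Fin m × Fin n) (Fin m × Fin n) ℂ)
    (hsym : ∀ A B : Matrix (Fin m × Fin n) (Fin m × Fin n) ℂ,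
        (φ A * B).trace = (φ B * A).trace) :
    (∀ (A : Matrix (Fin m) (Fin m) ℂ) (B : Matrix (Fin n) (Fin n) ℂ),
        (NormedSpace.exp (φ (kronSum A B))).det = (NormedSpace.exp (kronSum A B)).det) ↔
      (ptrace1 (φ 1) = (m : ℂ) • (1 : Matrix (Fin n) (Fin n) ℂ) ∧
       ptrace2 (φ 1) = (n : ℂ) • (1 : Matrix (Fin m) (Fin m) ℂ)) :=
  det_exp_kronSum_preserved_iff_of_rt_symmetric_general φ hsym
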